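/- (Continuous dependence on initial data) Let λ:[0,T] → [c₀,∞) be absolutely continuous, c₀ > 0, and for each n let (xₙ,vₙ) be the strong solution of λẋ + v̇ + v + ∇ψ(x) = 0, v ∈ ∂φ(x) with initial data (x₀ₙ, v₀ₙ), v₀ₙ ∈ ∂φ(x₀ₙ), and (x,v) the solution with data (x₀,v₀), v₀ ∈ ∂φ(x₀). If (x₀ₙ, v₀ₙ) → (x₀, v₀) in H×H, then (xₙ, vₙ) → (x, v) uniformly on [0,T]. -/

import Mathlib

/-
For two solutions put `u = λ (x₁ - x₂) + (v₁ - v₂)`. Subtracting the two equations gives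
`u̇ = λ̇ (x₁ - x₂) - (v₁ - v₂) - (∇ψ(x₁) - ∇ψ(x₂))` a.e., and since `u` is absolutely
continuous it is the primitive of the right-hand side. Monotonicity of `∂φ` gives
`⟪x₁ - x₂, v₁ - v₂⟫ ≥ 0`, hence `c₀ ‖x₁ - x₂‖ ≤ ‖u‖` and `‖v₁ - v₂‖ ≤ ‖u‖`, so
`‖u̇‖ ≤ (|λ̇| / c₀ + 1 + L_ψ / c₀) ‖u‖` and Grönwall's inequality yields
`‖u(t)‖ ≤ ‖u(0)‖ exp (‖λ̇‖_{L¹} / c₀ + T (1 + L_ψ / c₀))`. The right-hand side tends to `0`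
with the initial data, uniformly in `t`.
-/

open MeasureTheory Set Filter
open scoped Topology

variable {H : Type*} [NormedAddCommGroup H] [InnerProductSpace ℝ H] [CompleteSpace H]

/-- `v` belongs to the convex subdifferential of `φ` at `x`. -/
def IsSubdiff (φ : H → EReal) (x v : H) : Prop :=
  ∀ y : H, φ x + ((inner ℝ v (y - x) : ℝ) : EReal) ≤ φ y

/-- `φ` is proper, convex and lower semicontinuous. -/
def ProperConvexLSC (φ : H → EReal) : Prop :=
  (∀ z, φ z ≠ ⊥) ∧ (∃ z, φ z ≠ ⊤) ∧ LowerSemicontinuous φ ∧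
  (∀ z w : H, ∀ a b : ℝ, 0 ≤ a → 0 ≤ b → a + b = 1 →
      φ (a • z + b • w) ≤ (a : EReal) * φ z + (b : EReal) * φ w)

/-- Standing assumptions: `φ` proper convex lsc, `ψ` convex with gradient `ψ'`,
and `φ + ψ` bounded below on `H`. -/
def Standing (φ : H → EReal) (ψ : H → ℝ) (ψ' : H → H) : Prop :=
  ProperConvexLSC φ ∧
  ConvexOn ℝ Set.univ ψ ∧ (∀ z, HasGradientAt ψ (ψ' z) z) ∧
  (∃ m : ℝ, ∀ z, (m : EReal) ≤ φ z + (ψ z : EReal))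

/-- The energy gap `(φ+ψ)(x₀) - inf_H (φ+ψ)` as a real number. -/
noncomputable def Egap (φ : H → EReal) (ψ : H → ℝ) (x₀ : H) : ℝ :=
  ((φ x₀ + (ψ x₀ : EReal)) - sInf (Set.range fun z => φ z + (ψ z : EReal))).toReal

/-- `(x, v)` is a strong (absolutely continuous) solution on `[0, T]` of
`v ∈ ∂φ(x)`, `λ ẋ + v̇ + v + ∇ψ(x) = 0` a.e., with a.e. derivatives `x'`, `v'`. -/
structure StrongSol (φ : H → EReal) (ψ' : H → H) (lam : ℝ → ℝ) (T : ℝ)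
    (x v x' v' : ℝ → H) : Prop where
  subdiff : ∀ t ∈ Set.Icc (0:ℝ) T, IsSubdiff φ (x t) (v t)
  xint : IntegrableOn x' (Set.Icc 0 T)
  vint : IntegrableOn v' (Set.Icc 0 T)
  xrep : ∀ t ∈ Set.Icc (0:ℝ) T, x t = x 0 + ∫ s in (0:ℝ)..t, x' s
  vrep : ∀ t ∈ Set.Icc (0:ℝ) T, v t = v 0 + ∫ s in (0:ℝ)..t, v' s
  xderiv : ∀ᵐ t ∂(volume.restrict (Set.Ioo 0 T)), HasDerivAt x (x' t) t
  vderiv : ∀ᵐ t ∂(volume.restrict (Set.Ioo 0 T)), HasDerivAt v (v' t) t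
  eqn : ∀ᵐ t ∂(volume.restrict (Set.Ioo 0 T)),
      lam t • x' t + v' t + v t + ψ' (x t) = 0

section AbsolutelyContinuous

variable {X Y : Type*} [PseudoMetricSpace X] [PseudoMetricSpace Y] {a b : ℝ}

theorem AbsolutelyContinuousOnInterval.of_dist_le_mul {f : ℝ → X} {g : ℝ → Y} {C : ℝ}
    (hf : AbsolutelyContinuousOnInterval f a b)
    (h : ∀ x ∈ uIcc a b, ∀ y ∈ uIcc a b, dist (g x) (g y) ≤ C * dist (f x) (f y)) :
    AbsolutelyContinuousOnInterval g a b := by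
  unfold AbsolutelyContinuousOnInterval at hf ⊢
  refine squeeze_zero' (Eventually.of_forall fun _ ↦ Finset.sum_nonneg fun _ _ ↦ dist_nonneg)
    ?_ (by simpa using hf.const_mul C)
  rw [eventually_inf_principal]
  filter_upwards with E hE
  rw [Finset.mul_sum]
  exact Finset.sum_le_sum fun i hi ↦ h _ (hE.1 i hi).1 _ (hE.1 i hi).2

theorem LipschitzOnWith.comp_absolutelyContinuousOnInterval {g : X → Y} {f : ℝ → X}
    {K : NNReal} {s : Set X} (hg : LipschitzOnWith K g s)
    (hf : AbsolutelyContinuousOnInterval f a b) (hfs : MapsTo f (uIcc a b) s) :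
    AbsolutelyContinuousOnInterval (g ∘ f) a b :=
  hf.of_dist_le_mul fun _ hx _ hy ↦ hg.dist_le_mul _ (hfs hx) _ (hfs hy)

end AbsolutelyContinuous

section Primitive

variable {E : Type*} [NormedAddCommGroup E] [NormedSpace ℝ E] {a b : ℝ}

theorem IntervalIntegrable.absolutelyContinuousOnInterval_primitive {f : ℝ → E} {c : ℝ}
    (hf : IntervalIntegrable f volume a b) (hc : c ∈ uIcc a b) :
    AbsolutelyContinuousOnInterval (fun x ↦ ∫ v in c..x, f v) a b := by
  refine (hf.norm.absolutelyContinuousOnInterval_intervalIntegral hc).of_dist_le_mul (C := 1)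
    fun x hx y hy ↦ ?_
  have hint : ∀ z ∈ uIcc a b, IntervalIntegrable f volume c z :=
    fun z hz ↦ hf.mono_set (uIcc_subset_uIcc hc hz)
  rw [one_mul, dist_eq_norm, dist_eq_norm, intervalIntegral.integral_interval_sub_left
    (hint x hx) (hint y hy), intervalIntegral.integral_interval_sub_left
    (hint x hx).norm (hint y hy).norm, Real.norm_eq_abs]
  exact intervalIntegral.norm_integral_le_abs_integral_norm

theorem absolutelyContinuousOnInterval_of_eq_add_integral {f f' : ℝ → E} (hab : a ≤ b)
    (hf' : IntegrableOn f' (Icc a b)) (hf : ∀ x ∈ Icc a b, f x = f a + ∫ v in a..x, f' v) :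
    AbsolutelyContinuousOnInterval f a b := by
  rw [← uIcc_of_le hab] at hf' hf
  refine (hf'.intervalIntegrable.absolutelyContinuousOnInterval_primitive
    left_mem_uIcc).of_dist_le_mul (C := 1) fun x hx y hy ↦ ?_
  rw [hf x hx, hf y hy, dist_add_left, one_mul]

end Primitive

section FundamentalTheorem

variable {E : Type*} [NormedAddCommGroup E] [NormedSpace ℝ E] [CompleteSpace E] {a b : ℝ}

theorem AbsolutelyContinuousOnInterval.integral_eq_sub_of_ae_hasDerivAt {f f' : ℝ → E}
    (hf : AbsolutelyContinuousOnInterval f a b) (hf' : IntervalIntegrable f' volume a b)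
    (hderiv : ∀ᵐ x, x ∈ uIcc a b → HasDerivAt f (f' x) x) :
    ∫ x in a..b, f' x = f b - f a := by
  have hac : AbsolutelyContinuousOnInterval (fun x ↦ f x - ∫ v in a..x, f' v) a b :=
    hf.sub (hf'.absolutelyContinuousOnInterval_primitive left_mem_uIcc)
  obtain ⟨C, hC⟩ := hac.const_of_ae_hasDerivAt_zero <| by
    filter_upwards [hderiv, hf'.ae_hasDerivAt_integral] with x hx hx' hmem
    simpa using (hx hmem).fun_sub (hx' hmem a left_mem_uIcc)
  have ha := hC a left_mem_uIcc
  have hb := hC b right_mem_uIcc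
  simp only [intervalIntegral.integral_same, sub_zero] at ha
  rw [← ha] at hb
  rw [← hb, sub_sub_cancel]

theorem ae_hasDerivAt_of_eq_add_integral {f f' : ℝ → E}
    (hf' : IntegrableOn f' (Icc a b)) (hf : ∀ x ∈ Icc a b, f x = f a + ∫ v in a..x, f' v) :
    ∀ᵐ x, x ∈ Ioo a b → HasDerivAt f (f' x) x := by
  rcases le_total a b with hab | hba
  · rw [← uIcc_of_le hab] at hf'
    filter_upwards [hf'.intervalIntegrable.ae_hasDerivAt_integral] with x hx hxab
    have hxI : x ∈ uIcc a b := uIcc_of_le hab ▸ Ioo_subset_Icc_self hxab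
    exact ((hx hxI a left_mem_uIcc).const_add (f a)).congr_of_eventuallyEq <|
      eventually_of_mem (Icc_mem_nhds hxab.1 hxab.2) hf
  · exact Eventually.of_forall fun x hx ↦ absurd (hx.1.trans hx.2) hba.not_gt
end FundamentalTheorem

theorem Real.lipschitzOnWith_exp_Iic_zero : LipschitzOnWith 1 Real.exp (Iic 0) :=
  (convex_Iic 0).lipschitzOnWith_of_nnnorm_deriv_le (fun _ _ ↦ Real.differentiableAt_exp)
    fun x hx ↦ by
      rw [Real.deriv_exp, ← NNReal.coe_le_coe, coe_nnnorm, Real.norm_of_nonneg (Real.exp_pos x).le]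
      exact Real.exp_le_one_iff.2 hx

theorem le_mul_exp_integral_of_le_add_integral {f k : ℝ → ℝ} {B a b t : ℝ}
    (hf : ContinuousOn f (Icc a b)) (hk : IntegrableOn k (Icc a b))
    (hk0 : ∀ s ∈ Icc a b, 0 ≤ k s) (hle : ∀ s ∈ Icc a b, f s ≤ B + ∫ r in a..s, k r * f r)
    (ht : t ∈ Icc a b) :
    f t ≤ B * Real.exp (∫ s in a..t, k s) := by
  have hI : uIcc a t = Icc a t := uIcc_of_le ht.1
  have hsub : Icc a t ⊆ Icc a b := Icc_subset_Icc_right ht.2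
  have hkI : IntervalIntegrable k volume a t := (hk.mono_set (hI ▸ hsub)).intervalIntegrable
  have hkfI : IntervalIntegrable (fun s ↦ k s * f s) volume a t :=
    hkI.mul_continuousOn (hf.mono (hI ▸ hsub))
  set K : ℝ → ℝ := fun x ↦ ∫ s in a..x, k s
  set F : ℝ → ℝ := fun x ↦ B + ∫ s in a..x, k s * f s
  have hK0 : ∀ x ∈ Icc a t, 0 ≤ K x := fun x hx ↦
    intervalIntegral.integral_nonneg hx.1 fun s hs ↦ hk0 s ⟨hs.1, hs.2.trans (hsub hx).2⟩
  have hKac : AbsolutelyContinuousOnInterval K a t :=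
    hkI.absolutelyContinuousOnInterval_intervalIntegral left_mem_uIcc
  have hFac : AbsolutelyContinuousOnInterval F a t := by
    refine (hkfI.absolutelyContinuousOnInterval_intervalIntegral left_mem_uIcc).of_dist_le_mul
      (C := 1) fun x _ y _ ↦ ?_
    rw [dist_add_left, one_mul]
  have hEac : AbsolutelyContinuousOnInterval (fun x ↦ Real.exp (-K x)) a t :=
    Real.lipschitzOnWith_exp_Iic_zero.comp_absolutelyContinuousOnInterval hKac.neg
      fun x hx ↦ neg_nonpos.2 (hK0 x (hI ▸ hx))
  -- Integrating factor: `exp (-K) * F` is nonincreasing, its derivative being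
  -- `k * exp (-K) * (f - F) ≤ 0`.
  set G' : ℝ → ℝ := fun x ↦ k x * (Real.exp (-K x) * (f x - F x))
  have hderiv : ∀ᵐ x, x ∈ uIcc a t → HasDerivAt (fun x ↦ Real.exp (-K x) * F x) (G' x) x := by
    filter_upwards [hkI.ae_hasDerivAt_integral, hkfI.ae_hasDerivAt_integral] with x hK hF hx
    refine (((hK hx a left_mem_uIcc).fun_neg.exp).fun_mul
      ((hF hx a left_mem_uIcc).const_add B)).congr_deriv ?_
    simp only [G', K, F]
    ring
  have hG'I : IntervalIntegrable G' volume a t :=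
    hkI.mul_continuousOn (hEac.continuousOn.mul ((hf.mono (hI ▸ hsub)).sub hFac.continuousOn))
  have hG'nonpos : ∫ x in a..t, G' x ≤ 0 := by
    have := intervalIntegral.integral_nonneg ht.1 (μ := volume) (f := fun x ↦ -G' x) fun x hx ↦
      neg_nonneg.2 <| mul_nonpos_of_nonneg_of_nonpos (hk0 x (hsub hx)) <|
        mul_nonpos_of_nonneg_of_nonpos (Real.exp_pos _).le (sub_nonpos.2 (hle x (hsub hx)))
    rwa [intervalIntegral.integral_neg, neg_nonneg] at this
  rw [(hEac.fun_mul hFac).integral_eq_sub_of_ae_hasDerivAt hG'I hderiv] at hG'nonpos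
  have hFt : Real.exp (-K t) * F t ≤ B := by simpa [K, F] using hG'nonpos
  calc f t ≤ F t := hle t ht
    _ = Real.exp (-K t) * F t * Real.exp (K t) := by
      rw [mul_comm (Real.exp _), mul_assoc, ← Real.exp_add, neg_add_cancel, Real.exp_zero, mul_one]
    _ ≤ B * Real.exp (K t) := by gcongr

section Subdifferential

variable {E : Type*} [NormedAddCommGroup E] [InnerProductSpace ℝ E] {φ : E → EReal}

theorem IsSubdiff.ne_top (htop : ∃ z, φ z ≠ ⊤) {x v : E} (h : IsSubdiff φ x v) : φ x ≠ ⊤ := by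
  obtain ⟨z, hz⟩ := htop
  intro hx
  simpa [hx, hz] using h z

theorem IsSubdiff.inner_sub_sub_nonneg (hbot : ∀ z, φ z ≠ ⊥) (htop : ∃ z, φ z ≠ ⊤)
    {x y v w : E} (hx : IsSubdiff φ x v) (hy : IsSubdiff φ y w) :
    0 ≤ inner ℝ (x - y) (v - w) := by
  lift φ x to ℝ using ⟨hx.ne_top htop, hbot x⟩ with A hA
  lift φ y to ℝ using ⟨hy.ne_top htop, hbot y⟩ with B hB
  have h₁ := hx y
  have h₂ := hy x
  rw [← hA, ← hB, ← EReal.coe_add, EReal.coe_le_coe_iff] at h₁ h₂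
  rw [← neg_sub x y, inner_neg_right, real_inner_comm] at h₁
  rw [inner_sub_right, real_inner_comm w]
  linarith

theorem sq_mul_norm_add_sq_norm_le_sq_norm_smul_add {l : ℝ} {p q : E} (hl : 0 ≤ l)
    (hpq : 0 ≤ inner ℝ p q) : (l * ‖p‖) ^ 2 + ‖q‖ ^ 2 ≤ ‖l • p + q‖ ^ 2 := by
  rw [norm_add_sq_real, real_inner_smul_left, norm_smul, Real.norm_of_nonneg hl]
  nlinarith [mul_nonneg hl hpq]

theorem IsSubdiff.norm_sub_le_norm_smul_add (hbot : ∀ z, φ z ≠ ⊥) (htop : ∃ z, φ z ≠ ⊤)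
    {x y v w : E} (hx : IsSubdiff φ x v) (hy : IsSubdiff φ y w) {l : ℝ} (hl : 0 ≤ l) :
    l * ‖x - y‖ ≤ ‖l • (x - y) + (v - w)‖ ∧ ‖v - w‖ ≤ ‖l • (x - y) + (v - w)‖ := by
  have h := sq_mul_norm_add_sq_norm_le_sq_norm_smul_add hl (hx.inner_sub_sub_nonneg hbot htop hy)
  exact ⟨le_of_sq_le_sq (by linarith [sq_nonneg ‖v - w‖]) (norm_nonneg _),
    le_of_sq_le_sq (by linarith [sq_nonneg (l * ‖x - y‖)]) (norm_nonneg _)⟩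

end Subdifferential

namespace StrongSol

variable {φ : H → EReal} {ψ' : H → H} {lam lam' : ℝ → ℝ} {T c₀ Lψ : ℝ}
  {x₁ v₁ x₁' v₁' x₂ v₂ x₂' v₂' : ℝ → H}

omit [CompleteSpace H] in
theorem absolutelyContinuousOnInterval_smul_sub_add_sub (s₁ : StrongSol φ ψ' lam T x₁ v₁ x₁' v₁')
    (hT : 0 ≤ T) (hlam' : IntegrableOn lam' (Icc 0 T))
    (hlam : ∀ t ∈ Icc 0 T, lam t = lam 0 + ∫ s in 0..t, lam' s)
    (s₂ : StrongSol φ ψ' lam T x₂ v₂ x₂' v₂') :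
    AbsolutelyContinuousOnInterval (fun s ↦ lam s • (x₁ s - x₂ s) + (v₁ s - v₂ s)) 0 T :=
  ((absolutelyContinuousOnInterval_of_eq_add_integral hT hlam' hlam).fun_smul
    ((absolutelyContinuousOnInterval_of_eq_add_integral hT s₁.xint s₁.xrep).fun_sub
      (absolutelyContinuousOnInterval_of_eq_add_integral hT s₂.xint s₂.xrep))).fun_add
    ((absolutelyContinuousOnInterval_of_eq_add_integral hT s₁.vint s₁.vrep).fun_sub
      (absolutelyContinuousOnInterval_of_eq_add_integral hT s₂.vint s₂.vrep))

theorem smul_sub_add_sub_eq (hψ' : Continuous ψ') (hlam' : IntegrableOn lam' (Icc 0 T))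
    (hlam : ∀ t ∈ Icc 0 T, lam t = lam 0 + ∫ s in 0..t, lam' s)
    (s₁ : StrongSol φ ψ' lam T x₁ v₁ x₁' v₁') (s₂ : StrongSol φ ψ' lam T x₂ v₂ x₂' v₂')
    {t : ℝ} (ht : t ∈ Icc 0 T) :
    lam t • (x₁ t - x₂ t) + (v₁ t - v₂ t) = lam 0 • (x₁ 0 - x₂ 0) + (v₁ 0 - v₂ 0) +
      ∫ s in 0..t, (lam' s • (x₁ s - x₂ s) - (v₁ s - v₂ s + (ψ' (x₁ s) - ψ' (x₂ s)))) := by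
  have hT : 0 ≤ T := ht.1.trans ht.2
  have hI : uIcc 0 T = Icc 0 T := uIcc_of_le hT
  have hsub : uIcc 0 t ⊆ uIcc 0 T := uIcc_subset_uIcc left_mem_uIcc (hI ▸ ht)
  have hx₁ := absolutelyContinuousOnInterval_of_eq_add_integral hT s₁.xint s₁.xrep
  have hx₂ := absolutelyContinuousOnInterval_of_eq_add_integral hT s₂.xint s₂.xrep
  have hv := (absolutelyContinuousOnInterval_of_eq_add_integral hT s₁.vint s₁.vrep).sub
    (absolutelyContinuousOnInterval_of_eq_add_integral hT s₂.vint s₂.vrep)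
  have hac := s₁.absolutelyContinuousOnInterval_smul_sub_add_sub hT hlam' hlam s₂
  have hint : IntervalIntegrable
      (fun s ↦ lam' s • (x₁ s - x₂ s) - (v₁ s - v₂ s + (ψ' (x₁ s) - ψ' (x₂ s)))) volume 0 t := by
    refine (((hI ▸ hlam').intervalIntegrable.smul_continuousOn
      (hx₁.sub hx₂).continuousOn).sub (ContinuousOn.intervalIntegrable ?_)).mono_set hsub
    exact hv.continuousOn.add ((hψ'.comp_continuousOn hx₁.continuousOn).sub
      (hψ'.comp_continuousOn hx₂.continuousOn))
  have hderiv : ∀ᵐ s, s ∈ uIcc 0 t → HasDerivAt (fun s ↦ lam s • (x₁ s - x₂ s) + (v₁ s - v₂ s))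
      (lam' s • (x₁ s - x₂ s) - (v₁ s - v₂ s + (ψ' (x₁ s) - ψ' (x₂ s)))) s := by
    filter_upwards [Ioo_ae_eq_Icc (μ := volume) (a := (0 : ℝ)) (b := T),
      ae_hasDerivAt_of_eq_add_integral hlam' hlam,
      (ae_restrict_iff' measurableSet_Ioo).1 s₁.xderiv,
      (ae_restrict_iff' measurableSet_Ioo).1 s₂.xderiv,
      (ae_restrict_iff' measurableSet_Ioo).1 s₁.vderiv,
      (ae_restrict_iff' measurableSet_Ioo).1 s₂.vderiv,
      (ae_restrict_iff' measurableSet_Ioo).1 s₁.eqn,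
      (ae_restrict_iff' measurableSet_Ioo).1 s₂.eqn]
      with s hs hl hx₁' hx₂' hv₁' hv₂' he₁ he₂ hst
    have hsI : s ∈ Ioo 0 T := by
      have := hsub hst
      rw [hI] at this
      exact (eq_iff_iff.1 hs).2 this
    refine (((hl hsI).smul ((hx₁' hsI).sub (hx₂' hsI))).add
      ((hv₁' hsI).sub (hv₂' hsI))).congr_deriv ?_
    simp only [Pi.sub_apply]
    linear_combination (norm := module) he₁ hsI - he₂ hsI
  rw [(hac.mono hsub).integral_eq_sub_of_ae_hasDerivAt hint hderiv]
  abel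

theorem norm_smul_sub_add_sub_le (hbot : ∀ z, φ z ≠ ⊥) (htop : ∃ z, φ z ≠ ⊤)
    (hLψ : 0 ≤ Lψ) (hlip : ∀ a b : H, ‖ψ' a - ψ' b‖ ≤ Lψ * ‖a - b‖) (hc₀ : 0 < c₀)
    (hlamc₀ : ∀ t ∈ Icc 0 T, c₀ ≤ lam t) (hlam' : IntegrableOn lam' (Icc 0 T))
    (hlam : ∀ t ∈ Icc 0 T, lam t = lam 0 + ∫ s in 0..t, lam' s)
    (s₁ : StrongSol φ ψ' lam T x₁ v₁ x₁' v₁') (s₂ : StrongSol φ ψ' lam T x₂ v₂ x₂' v₂')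
    {t : ℝ} (ht : t ∈ Icc 0 T) :
    ‖lam t • (x₁ t - x₂ t) + (v₁ t - v₂ t)‖ ≤ ‖lam 0 • (x₁ 0 - x₂ 0) + (v₁ 0 - v₂ 0)‖ *
      Real.exp (∫ s in 0..T, (|lam' s| / c₀ + 1 + Lψ / c₀)) := by
  have hT : 0 ≤ T := ht.1.trans ht.2
  have hI : uIcc 0 T = Icc 0 T := uIcc_of_le hT
  set u : ℝ → H := fun s ↦ lam s • (x₁ s - x₂ s) + (v₁ s - v₂ s)
  set k : ℝ → ℝ := fun s ↦ |lam' s| / c₀ + 1 + Lψ / c₀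
  have hψ' : Continuous ψ' := (LipschitzWith.of_dist_le_mul (K := Lψ.toNNReal) fun a b ↦ by
    simpa only [dist_eq_norm, Real.coe_toNNReal _ hLψ] using hlip a b).continuous
  have hu : ContinuousOn u (Icc 0 T) :=
    hI ▸ (s₁.absolutelyContinuousOnInterval_smul_sub_add_sub hT hlam' hlam s₂).continuousOn
  have hk : IntegrableOn k (Icc 0 T) :=
    ((hlam'.abs.div_const c₀).add (integrableOn_const measure_Icc_lt_top.ne)).add
      (integrableOn_const measure_Icc_lt_top.ne)
  have hk0 : ∀ s ∈ Icc 0 T, 0 ≤ k s := fun s _ ↦ by positivity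
  have hrate : ∀ s ∈ Icc 0 T, ‖lam' s • (x₁ s - x₂ s) - (v₁ s - v₂ s + (ψ' (x₁ s) - ψ' (x₂ s)))‖
      ≤ k s * ‖u s‖ := by
    intro s hs
    obtain ⟨hlx, hv⟩ := (s₁.subdiff s hs).norm_sub_le_norm_smul_add hbot htop (s₂.subdiff s hs)
      (hc₀.le.trans (hlamc₀ s hs))
    have hx : ‖x₁ s - x₂ s‖ ≤ ‖u s‖ / c₀ := by
      rw [le_div_iff₀ hc₀, mul_comm]
      exact (mul_le_mul_of_nonneg_right (hlamc₀ s hs) (norm_nonneg _)).trans hlx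
    calc _ ≤ |lam' s| * ‖x₁ s - x₂ s‖ + (‖v₁ s - v₂ s‖ + Lψ * ‖x₁ s - x₂ s‖) := by
          grw [norm_sub_le, norm_add_le, norm_smul, Real.norm_eq_abs, hlip]
      _ ≤ |lam' s| * (‖u s‖ / c₀) + (‖u s‖ + Lψ * (‖u s‖ / c₀)) := by gcongr
      _ = k s * ‖u s‖ := by simp only [k]; ring
  have hkt : ∫ s in 0..t, k s ≤ ∫ s in 0..T, k s :=
    intervalIntegral.integral_mono_interval le_rfl ht.1 ht.2
      (Eventually.of_forall fun s ↦ by positivity)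
      ((intervalIntegrable_iff_integrableOn_Icc_of_le hT).2 hk)
  refine (le_mul_exp_integral_of_le_add_integral hu.norm hk hk0 (fun s hs ↦ ?_) ht).trans
    (by gcongr)
  have hsub : uIcc 0 s ⊆ Icc 0 T := by rw [uIcc_of_le hs.1]; exact Icc_subset_Icc_right hs.2
  calc ‖u s‖ ≤ ‖u 0‖ + ‖∫ r in 0..s, (lam' r • (x₁ r - x₂ r) -
        (v₁ r - v₂ r + (ψ' (x₁ r) - ψ' (x₂ r))))‖ := by
        simp only [u]
        rw [smul_sub_add_sub_eq hψ' hlam' hlam s₁ s₂ hs]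
        exact norm_add_le _ _
    _ ≤ ‖u 0‖ + ∫ r in 0..s, k r * ‖u r‖ := by
        gcongr
        refine intervalIntegral.norm_integral_le_of_norm_le hs.1
          (Eventually.of_forall fun r hr ↦ hrate r ⟨hr.1.le, hr.2.trans hs.2⟩) ?_
        exact (hk.mono_set hsub).intervalIntegrable.mul_continuousOn (hu.norm.mono hsub)

theorem norm_sub_le (hbot : ∀ z, φ z ≠ ⊥) (htop : ∃ z, φ z ≠ ⊤)
    (hLψ : 0 ≤ Lψ) (hlip : ∀ a b : H, ‖ψ' a - ψ' b‖ ≤ Lψ * ‖a - b‖) (hc₀ : 0 < c₀)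
    (hlamc₀ : ∀ t ∈ Icc 0 T, c₀ ≤ lam t) (hlam' : IntegrableOn lam' (Icc 0 T))
    (hlam : ∀ t ∈ Icc 0 T, lam t = lam 0 + ∫ s in 0..t, lam' s)
    (s₁ : StrongSol φ ψ' lam T x₁ v₁ x₁' v₁') (s₂ : StrongSol φ ψ' lam T x₂ v₂ x₂' v₂')
    {t : ℝ} (ht : t ∈ Icc 0 T) :
    max (c₀ * ‖x₁ t - x₂ t‖) ‖v₁ t - v₂ t‖ ≤ ‖lam 0 • (x₁ 0 - x₂ 0) + (v₁ 0 - v₂ 0)‖ *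
      Real.exp (∫ s in 0..T, (|lam' s| / c₀ + 1 + Lψ / c₀)) := by
  have hu := s₁.norm_smul_sub_add_sub_le hbot htop hLψ hlip hc₀ hlamc₀ hlam' hlam s₂ ht
  obtain ⟨hx, hv⟩ := (s₁.subdiff t ht).norm_sub_le_norm_smul_add hbot htop (s₂.subdiff t ht)
      (hc₀.le.trans (hlamc₀ t ht))
  exact max_le ((mul_le_mul_of_nonneg_right (hlamc₀ t ht) (norm_nonneg _)).trans (hx.trans hu))
    (hv.trans hu)

end StrongSol

theorem stmt11_general (φ : H → EReal) (ψ : H → ℝ) (ψ' : H → H) (hst : Standing φ ψ ψ')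
    (Lψ : ℝ) (hLψ : 0 ≤ Lψ)
    (hlip : ∀ a b : H, ‖ψ' a - ψ' b‖ ≤ Lψ * ‖a - b‖)
    (lam lam' : ℝ → ℝ) (T c₀ : ℝ) (hc₀ : 0 < c₀)
    (hlam : ∀ t ∈ Set.Icc (0:ℝ) T, c₀ ≤ lam t)
    (hlamint : IntegrableOn lam' (Set.Icc 0 T))
    (hlamrep : ∀ t ∈ Set.Icc (0:ℝ) T, lam t = lam 0 + ∫ s in (0:ℝ)..t, lam' s)
    (x₀n v₀n : ℕ → H) (x₀ v₀ : H)
    (xn vn xn' vn' : ℕ → ℝ → H) (x v x' v' : ℝ → H)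
    (soln : ∀ n, StrongSol φ ψ' lam T (xn n) (vn n) (xn' n) (vn' n))
    (hxn0 : ∀ n, xn n 0 = x₀n n) (hvn0 : ∀ n, vn n 0 = v₀n n)
    (sol : StrongSol φ ψ' lam T x v x' v')
    (hx0 : x 0 = x₀) (hv0 : v 0 = v₀)
    (hconv : Tendsto (fun n => (x₀n n, v₀n n)) atTop (𝓝 (x₀, v₀))) :
    TendstoUniformlyOn (fun n t => (xn n t, vn n t)) (fun t => (x t, v t)) atTop
      (Set.Icc (0:ℝ) T) := by
  obtain ⟨⟨hbot, htop, -⟩, -⟩ := hst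
  set C := Real.exp (∫ s in 0..T, (|lam' s| / c₀ + 1 + Lψ / c₀))
  have hD : Tendsto (fun n ↦ ‖lam 0 • (x₀n n - x₀) + (v₀n n - v₀)‖ * C) atTop (𝓝 0) := by
    have : Continuous fun p : H × H ↦ ‖lam 0 • (p.1 - x₀) + (p.2 - v₀)‖ * C := by fun_prop
    have h := (this.tendsto (x₀, v₀)).comp hconv
    rwa [sub_self, sub_self, smul_zero, add_zero, norm_zero, zero_mul] at h
  rw [Metric.tendstoUniformlyOn_iff]
  intro ε hε
  filter_upwards [hD.eventually (gt_mem_nhds (by positivity : 0 < ε * min c₀ 1))] with n hn t ht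
  obtain ⟨hx, hv⟩ := max_le_iff.1 <|
    (soln n).norm_sub_le hbot htop hLψ hlip hc₀ hlam hlamint hlamrep sol ht
  rw [hxn0, hvn0, hx0, hv0] at hx hv
  rw [Prod.dist_eq, dist_comm, dist_comm (v t), dist_eq_norm, dist_eq_norm]
  refine max_lt ?_ ?_
  · nlinarith [min_le_left c₀ 1]
  · nlinarith [min_le_right c₀ 1]

theorem stmt11 (φ : H → EReal) (ψ : H → ℝ) (ψ' : H → H) (hst : Standing φ ψ ψ')
    (Lψ : ℝ) (hLψ : 0 ≤ Lψ)
    (hlip : ∀ a b : H, ‖ψ' a - ψ' b‖ ≤ Lψ * ‖a - b‖)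
    (lam lam' : ℝ → ℝ) (T c₀ : ℝ) (hT : 0 < T) (hc₀ : 0 < c₀)
    (hlam : ∀ t ∈ Set.Icc (0:ℝ) T, c₀ ≤ lam t)
    (hlamint : IntegrableOn lam' (Set.Icc 0 T))
    (hlamrep : ∀ t ∈ Set.Icc (0:ℝ) T, lam t = lam 0 + ∫ s in (0:ℝ)..t, lam' s)
    (x₀n v₀n : ℕ → H) (x₀ v₀ : H)
    (hv₀n : ∀ n, IsSubdiff φ (x₀n n) (v₀n n)) (hv₀ : IsSubdiff φ x₀ v₀)
    (xn vn xn' vn' : ℕ → ℝ → H) (x v x' v' : ℝ → H)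
    (soln : ∀ n, StrongSol φ ψ' lam T (xn n) (vn n) (xn' n) (vn' n))
    (hxn0 : ∀ n, xn n 0 = x₀n n) (hvn0 : ∀ n, vn n 0 = v₀n n)
    (sol : StrongSol φ ψ' lam T x v x' v')
    (hx0 : x 0 = x₀) (hv0 : v 0 = v₀)
    (hconv : Tendsto (fun n => (x₀n n, v₀n n)) atTop (𝓝 (x₀, v₀))) :
    TendstoUniformlyOn (fun n t => (xn n t, vn n t)) (fun t => (x t, v t)) atTop
      (Set.Icc (0:ℝ) T) :=
  stmt11_general φ ψ ψ' hst Lψ hLψ hlip lam lam' T c₀ hc₀ hlam hlamint hlamrep x₀n v₀n x₀ v₀ xn vn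
    xn' vn' x v x' v' soln hxn0 hvn0 sol hx0 hv0 hconv
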